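/- arXiv:math/9912130 — 4 statements merged into one kernel-verified Lean document; each statement's English description precedes it below -/
import Mathlib

section
/- With E_i^k the coefficient of λ^i in det(1 + λ G_k), where G_k is the k-th leading principal minor matrix of G_n, the quantum elementary symmetric functions satisfy the recurrence E_i^k = E_i^{k-1} + x_k E_{i-1}^{k-1} + q_{k-1} E_{i-2}^{k-2}. -/
/-!
Over `(Pn n)[λ]` the matrix `1 + λ G_k` is tridiagonal with diagonal `1 + λ x_i`, superdiagonal
`λ q_i` and subdiagonal `-λ`, so expanding its determinant `D_k` along the last row gives the
continuant recurrence `D_k = (1 + λ x_k) D_{k-1} + λ² q_{k-1} D_{k-2}`. Reading off the coefficient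
of `λ^i` (indexed by `ℤ`, so that the shifts by `λ` and `λ²` need no case split) gives the claim.
-/

open MvPolynomial Polynomial

/-- The ring `P_n = ℤ[q_1,…,q_{n-1}][x_1,…,x_n]`, with `x_i = X (.inl i)` and
`q_j = X (.inr j)`. -/
abbrev Pn (n : ℕ) := MvPolynomial (Fin n ⊕ Fin (n - 1)) ℤ

/-- The tridiagonal matrix `G_n` with diagonal `x_1,…,x_n`, superdiagonal `q_1,…,q_{n-1}`,
and subdiagonal entries `-1`. -/
noncomputable def Gmat (n : ℕ) : Matrix (Fin n) (Fin n) (Pn n) :=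
  Matrix.of fun i j =>
    if i = j then MvPolynomial.X (Sum.inl i)
    else if h : (i : ℕ) + 1 = (j : ℕ) then
      MvPolynomial.X (Sum.inr ⟨(i : ℕ), by have := j.isLt; omega⟩)
    else if (j : ℕ) + 1 = (i : ℕ) then -1
    else 0

/-- `Eq' n k hk i` is the quantum elementary symmetric function `E_i^k`: the coefficient of
`λ^i` in `det(1 + λ G_k)`, where `G_k` is the `k`-th leading principal submatrix of `G_n`. -/
noncomputable def Eqs (n : ℕ) (k : ℕ) (hk : k ≤ n) (i : ℕ) : Pn n :=
  (Matrix.det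
     (1 + (Polynomial.X : Polynomial (Pn n)) •
        ((Gmat n).submatrix (Fin.castLE hk) (Fin.castLE hk)).map Polynomial.C)).coeff i

/-- Integer-indexed version of `Eqs`, with the convention `E_i^k = 0` for `i < 0`. -/
noncomputable def EqsZ (n : ℕ) (k : ℕ) (hk : k ≤ n) (i : ℤ) : Pn n :=
  if 0 ≤ i then Eqs n k hk i.toNat else 0

namespace Matrix

theorem det_succ_of_last_col_eq_zero {R : Type*} [CommRing R] {m : ℕ}
    (A : Matrix (Fin (m + 1)) (Fin (m + 1)) R) (hA : ∀ i ≠ Fin.last m, A i (Fin.last m) = 0) :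
    A.det = A (Fin.last m) (Fin.last m) * (A.submatrix Fin.castSucc Fin.castSucc).det := by
  rw [det_succ_column A (Fin.last m), Finset.sum_eq_single (Fin.last m)
    (fun i _ hi => by rw [hA i hi, mul_zero, zero_mul]) (by simp)]
  simp [Fin.succAbove_last, ← two_mul, pow_mul]

section Tridiagonal

variable {R S : Type*}

def tridiagonal [Zero R] (a b c : ℕ → R) (m : ℕ) : Matrix (Fin m) (Fin m) R :=
  of fun i j =>
    if (i : ℕ) = j then a i
    else if (i : ℕ) + 1 = j then b i
    else if (j : ℕ) + 1 = i then c j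
    else 0

theorem tridiagonal_submatrix_castSucc [Zero R] (a b c : ℕ → R) (m : ℕ) :
    (tridiagonal a b c (m + 1)).submatrix Fin.castSucc Fin.castSucc = tridiagonal a b c m := by
  ext i j
  simp [tridiagonal]

theorem tridiagonal_map [Zero R] [Zero S] (a b c : ℕ → R) (m : ℕ) {f : R → S} (hf : f 0 = 0) :
    (tridiagonal a b c m).map f = tridiagonal (f ∘ a) (f ∘ b) (f ∘ c) m := by
  ext i j
  simp only [map_apply, tridiagonal, of_apply, Function.comp_apply]
  split_ifs <;> simp [hf]

theorem smul_tridiagonal [Zero R] [SMulZeroClass S R] (a b c : ℕ → R) (m : ℕ) (s : S) :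
    s • tridiagonal a b c m = tridiagonal (s • a) (s • b) (s • c) m := by
  ext i j
  simp only [smul_apply, tridiagonal, of_apply, Pi.smul_apply]
  split_ifs <;> simp

theorem one_add_tridiagonal [AddZeroClass R] [One R] (a b c : ℕ → R) (m : ℕ) :
    1 + tridiagonal a b c m = tridiagonal (1 + a) b c m := by
  ext i j
  simp only [add_apply, one_apply, tridiagonal, of_apply, Pi.add_apply, Pi.one_apply, Fin.ext_iff]
  split_ifs <;> simp

theorem det_tridiagonal_succ_succ [CommRing R] (a b c : ℕ → R) (m : ℕ) :
    (tridiagonal a b c (m + 2)).det =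
      a (m + 1) * (tridiagonal a b c (m + 1)).det - b m * c m * (tridiagonal a b c m).det := by
  set T := tridiagonal a b c (m + 2)
  set p : Fin (m + 2) := (Fin.last m).castSucc
  -- Deleting row `m + 1` and column `m` leaves `b m` alone in the last column.
  have hminor : (T.submatrix (Fin.last (m + 1)).succAbove p.succAbove).det =
      b m * (tridiagonal a b c m).det := by
    rw [det_succ_of_last_col_eq_zero]
    · congr 1
      · simp [T, p, tridiagonal, Fin.succAbove]
      · congr 1
        ext i j
        simp [T, p, tridiagonal, Fin.succAbove, Fin.lt_def]
    · intro i hi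
      have : (i : ℕ) < m := Fin.val_lt_last hi
      simp (disch := omega) [T, p, tridiagonal, Fin.succAbove, if_neg]
  have hrow : ∀ j : Fin m, T (Fin.last (m + 1)) j.castSucc.castSucc = 0 := by
    intro j
    have := j.isLt
    simp (disch := omega) [T, tridiagonal, if_neg]
  have hdiag : T (Fin.last (m + 1)) (Fin.last (m + 1)) = a (m + 1) := by simp [T, tridiagonal]
  have hsubdiag : T (Fin.last (m + 1)) p = c m := by
    simp (disch := omega) [T, p, tridiagonal, if_neg]
  have hsign_even : (-1 : R) ^ ((m + 1) + (m + 1)) = 1 := Even.neg_one_pow ⟨m + 1, rfl⟩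
  have hsign_odd : (-1 : R) ^ ((m + 1) + m) = -1 := Odd.neg_one_pow ⟨m, by ring⟩
  rw [det_succ_row T (Fin.last (m + 1)), Fin.sum_univ_castSucc, Fin.sum_univ_castSucc,
    Finset.sum_eq_zero fun j _ => by rw [hrow, mul_zero, zero_mul], hminor]
  simp only [Fin.val_last, Fin.val_castSucc]
  rw [Fin.succAbove_last, tridiagonal_submatrix_castSucc, hdiag, hsubdiag, hsign_even, hsign_odd]
  ring

end Tridiagonal

end Matrix

namespace Polynomial

variable {R : Type*} [Semiring R]

def intCoeff (p : R[X]) (i : ℤ) : R := if 0 ≤ i then p.coeff i.toNat else 0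

theorem intCoeff_add (p q : R[X]) (i : ℤ) : (p + q).intCoeff i = p.intCoeff i + q.intCoeff i := by
  unfold intCoeff
  split_ifs <;> simp

theorem intCoeff_C_mul (r : R) (p : R[X]) (i : ℤ) : (C r * p).intCoeff i = r * p.intCoeff i := by
  unfold intCoeff
  split_ifs <;> simp

theorem intCoeff_X_mul (p : R[X]) (i : ℤ) : (X * p).intCoeff i = p.intCoeff (i - 1) := by
  unfold intCoeff
  by_cases hi : 0 ≤ i - 1
  · rw [if_pos (by omega), if_pos hi, show i.toNat = (i - 1).toNat + 1 by omega, coeff_X_mul]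
  · rw [if_neg hi]
    split_ifs with hi'
    · rw [show i.toNat = 0 by omega, coeff_X_mul_zero]
    · rfl

end Polynomial

open Matrix

-- `xSeq n i = x_{i+1}` and `qSeq n i = q_{i+1}`, padded with the junk value `0` out of range.
noncomputable def xSeq (n i : ℕ) : Pn n := if h : i < n then MvPolynomial.X (Sum.inl ⟨i, h⟩) else 0

noncomputable def qSeq (n i : ℕ) : Pn n :=
  if h : i < n - 1 then MvPolynomial.X (Sum.inr ⟨i, h⟩) else 0

theorem Gmat_submatrix_castLE {n k : ℕ} (hk : k ≤ n) :
    (Gmat n).submatrix (Fin.castLE hk) (Fin.castLE hk) =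
      tridiagonal (xSeq n) (qSeq n) (fun _ => -1) k := by
  ext i j : 1
  have hi : (i : ℕ) < n := i.isLt.trans_le hk
  simp only [submatrix_apply, Gmat, tridiagonal, of_apply, Fin.ext_iff, Fin.val_castLE]
  split_ifs with hdiag hsuper
  · rw [xSeq, dif_pos hi]
    rfl
  · rw [qSeq, dif_pos (by omega)]
  all_goals rfl

noncomputable def oneAddXSmulG (n k : ℕ) : Matrix (Fin k) (Fin k) (Pn n)[X] :=
  tridiagonal (fun i => 1 + Polynomial.X * Polynomial.C (xSeq n i))
    (fun i => Polynomial.X * Polynomial.C (qSeq n i)) (fun _ => -Polynomial.X) k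

theorem EqsZ_eq_intCoeff_det {n k : ℕ} (hk : k ≤ n) (i : ℤ) :
    EqsZ n k hk i = (oneAddXSmulG n k).det.intCoeff i := by
  rw [EqsZ, Eqs, Gmat_submatrix_castLE, tridiagonal_map _ _ _ _ (map_zero _), smul_tridiagonal,
    one_add_tridiagonal, oneAddXSmulG]
  congr 4
  ext1
  simp only [Pi.smul_apply, Function.comp_apply, map_neg, map_one, smul_eq_mul]
  ring

theorem det_oneAddXSmulG_succ_succ {n m : ℕ} (hm : m + 2 ≤ n) :
    (oneAddXSmulG n (m + 2)).det =
      (oneAddXSmulG n (m + 1)).det +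
        Polynomial.C (MvPolynomial.X (Sum.inl ⟨m + 1, by omega⟩)) *
          (Polynomial.X * (oneAddXSmulG n (m + 1)).det) +
        Polynomial.C (MvPolynomial.X (Sum.inr ⟨m, by omega⟩)) *
          (Polynomial.X * (Polynomial.X * (oneAddXSmulG n m).det)) := by
  simp only [oneAddXSmulG]
  rw [det_tridiagonal_succ_succ, xSeq, qSeq, dif_pos (by omega), dif_pos (by omega)]
  ring

/-- The recurrence `E_i^k = E_i^{k-1} + x_k E_{i-1}^{k-1} + q_{k-1} E_{i-2}^{k-2}` for the
quantum elementary symmetric functions (with `E_i^k = 0` for `i < 0` or `i > k`). -/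
theorem Eqs_recurrence (n k : ℕ) (hk2 : 2 ≤ k) (hkn : k ≤ n) (i : ℤ) :
    EqsZ n k hkn i =
      EqsZ n (k - 1) (by omega) i +
        MvPolynomial.X (Sum.inl (⟨k - 1, by omega⟩ : Fin n)) * EqsZ n (k - 1) (by omega) (i - 1) +
        MvPolynomial.X (Sum.inr (⟨k - 2, by omega⟩ : Fin (n - 1))) *
          EqsZ n (k - 2) (by omega) (i - 2) := by
  obtain ⟨m, rfl⟩ : ∃ m, k = m + 2 := ⟨k - 2, by omega⟩
  simp only [EqsZ_eq_intCoeff_det, show m + 2 - 1 = m + 1 from rfl, show m + 2 - 2 = m from rfl]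
  rw [det_oneAddXSmulG_succ_succ hkn, intCoeff_add, intCoeff_add, intCoeff_C_mul, intCoeff_C_mul,
    intCoeff_X_mul, intCoeff_X_mul, intCoeff_X_mul, sub_sub]
  norm_num
end

section
/- The Bruhat operators satisfy the commutativity relation [ij][kl] = [kl][ij] whenever i, j, k, l are pairwise distinct. -/
open Finsupp

/-- The Coxeter length of a permutation of `Fin n`: the number of inversions. -/
def len {n : ℕ} (w : Equiv.Perm (Fin n)) : ℕ :=
  ((Finset.univ : Finset (Fin n × Fin n)).filter
    (fun p => p.1 < p.2 ∧ w p.2 < w p.1)).card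

open Classical in
/-- The Bruhat operator `[ij]` on the free `ℤ`-module with basis `S_n`:
`[ij]·w = w·s_{ij}` if `ℓ(w s_{ij}) = ℓ(w) + 1`, and `0` otherwise. -/
noncomputable def bruhatOp {n : ℕ} (i j : Fin n) :
    (Equiv.Perm (Fin n) →₀ ℤ) →ₗ[ℤ] (Equiv.Perm (Fin n) →₀ ℤ) :=
  Finsupp.lsum ℤ fun w =>
    if len (w * Equiv.swap i j) = len w + 1 then
      Finsupp.lsingle (w * Equiv.swap i j)
    else 0

lemma len_mul_swap {n : ℕ} (u : Equiv.Perm (Fin n)) {a b : Fin n} (hab : a < b)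
    (hu : u a < u b) :
    len (u * Equiv.swap a b) = len u + 1 +
      2 * ((Finset.univ.filter fun m : Fin n => a < m ∧ m < b ∧ u a < u m ∧ u m < u b).card) := by
  classical
  set s := Equiv.swap a b with hs
  have hsa : s a = b := Equiv.swap_apply_left a b
  have hsb : s b = a := Equiv.swap_apply_right a b
  set I : Finset (Fin n × Fin n) := Finset.univ.filter (fun p => p.1 < p.2 ∧ u p.2 < u p.1) with hI
  set J : Finset (Fin n × Fin n) := Finset.univ.filter (fun p => s p.1 < s p.2 ∧ u p.2 < u p.1) with hJ
  set Bet : Finset (Fin n) := Finset.univ.filter (fun m => a < m ∧ m < b) with hBet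
  set SA : Finset (Fin n) := Bet.filter (fun m => u m < u b) with hSA
  set SB : Finset (Fin n) := Bet.filter (fun m => u a < u m) with hSB
  set SA' : Finset (Fin n) := Bet.filter (fun m => u b < u m) with hSA'
  set SB' : Finset (Fin n) := Bet.filter (fun m => u m < u a) with hSB'
  set C : Finset (Fin n) := Finset.univ.filter (fun m => a < m ∧ m < b ∧ u a < u m ∧ u m < u b) with hC
  have uinj : Function.Injective u := u.injective
  -- step 1 : len (u*s) = J.card
  have e1 : len (u * s) = J.card := by
    unfold len
    rw [hJ, hs]
    apply Finset.card_nbij' (fun p => (Equiv.swap a b p.1, Equiv.swap a b p.2))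
      (fun p => (Equiv.swap a b p.1, Equiv.swap a b p.2))
    · intro p hp
      simp only [Finset.coe_filter, Set.mem_setOf_eq, Finset.mem_filter, Finset.mem_univ, true_and] at hp ⊢
      simpa [Equiv.swap_apply_self] using hp
    · intro p hp
      simp only [Finset.coe_filter, Set.mem_setOf_eq, Finset.mem_filter, Finset.mem_univ, true_and] at hp ⊢
      simpa [Equiv.swap_apply_self, Equiv.Perm.mul_apply] using hp
    · intro p hp; simp [Equiv.swap_apply_self]
    · intro p hp; simp [Equiv.swap_apply_self]
  -- step 4 : J \ I
  have e4 : J \ I = insert (b, a) ((SA.image fun m => (b, m)) ∪ (SB.image fun m => (m, a))) := by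
    ext ⟨p, q⟩
    simp only [hJ, hI, hSA, hSB, hBet, Finset.mem_sdiff, Finset.mem_filter, Finset.mem_univ,
      true_and, Finset.mem_insert, Finset.mem_union, Finset.mem_image, Prod.mk.injEq]
    constructor
    · rintro ⟨⟨hss, huu⟩, hni⟩
      have hpq : q < p := by
        rcases lt_trichotomy p q with h | h | h
        · exact absurd ⟨h, huu⟩ hni
        · exact absurd (h ▸ huu) (lt_irrefl _)
        · exact h
      by_cases hpa : p = a
      · rw [hpa] at hss hpq
        have hqb : q ≠ b := (hpq.trans hab).ne
        rw [hsa, Equiv.swap_apply_of_ne_of_ne hpq.ne hqb] at hss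
        exact absurd (hss.trans (hpq.trans hab)) (lt_irrefl b)
      by_cases hpb : p = b
      · rw [hpb] at hss hpq huu
        by_cases hqa : q = a
        · exact Or.inl ⟨hpb, hqa⟩
        · rw [hsb, Equiv.swap_apply_of_ne_of_ne hqa hpq.ne] at hss
          exact Or.inr (Or.inl ⟨q, ⟨⟨hss, hpq⟩, huu⟩, hpb.symm, rfl⟩)
      · rw [Equiv.swap_apply_of_ne_of_ne hpa hpb] at hss
        by_cases hqa : q = a
        · rw [hqa, hsa] at hss
          rw [hqa] at hpq huu
          exact Or.inr (Or.inr ⟨p, ⟨⟨hpq, hss⟩, huu⟩, rfl, hqa.symm⟩)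
        by_cases hqb : q = b
        · rw [hqb, hsb] at hss
          rw [hqb] at hpq
          exact absurd (hss.trans (hab.trans hpq)) (lt_irrefl p)
        · rw [Equiv.swap_apply_of_ne_of_ne hqa hqb] at hss
          exact absurd (hss.trans hpq) (lt_irrefl p)
    · rintro (⟨hp, hq⟩ | ⟨m, ⟨⟨ham, hmb⟩, hm⟩, hp, hq⟩ | ⟨m, ⟨⟨ham, hmb⟩, hm⟩, hp, hq⟩)
      · rw [hp, hq, hsa, hsb]
        exact ⟨⟨hab, hu⟩, fun h => absurd (h.1.trans hab) (lt_irrefl b)⟩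
      · rw [← hp, ← hq, hsb, Equiv.swap_apply_of_ne_of_ne ham.ne' hmb.ne]
        exact ⟨⟨ham, hm⟩, fun h => absurd (h.1.trans hmb) (lt_irrefl b)⟩
      · rw [← hp, ← hq, hsa, Equiv.swap_apply_of_ne_of_ne ham.ne' hmb.ne]
        exact ⟨⟨hmb, hm⟩, fun h => absurd (ham.trans h.1) (lt_irrefl a)⟩
  -- step 6 : I \ J
  have e6 : I \ J = (SA'.image fun m => (m, b)) ∪ (SB'.image fun m => (a, m)) := by
    ext ⟨p, q⟩
    simp only [hJ, hI, hSA', hSB', hBet, Finset.mem_sdiff, Finset.mem_filter, Finset.mem_univ,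
      true_and, Finset.mem_union, Finset.mem_image, Prod.mk.injEq]
    constructor
    · rintro ⟨⟨hpq, huu⟩, hnj⟩
      have hss : s q < s p := by
        rcases lt_trichotomy (s p) (s q) with h | h | h
        · exact absurd ⟨h, huu⟩ hnj
        · exact absurd (s.injective h) hpq.ne
        · exact h
      by_cases hpa : p = a
      · rw [hpa] at hss hpq huu
        by_cases hqb : q = b
        · rw [hqb] at huu
          exact absurd hu (fun h => absurd (h.trans huu) (lt_irrefl _))
        · rw [hsa, Equiv.swap_apply_of_ne_of_ne hpq.ne' hqb] at hss
          exact Or.inr ⟨q, ⟨⟨hpq, hss⟩, huu⟩, hpa.symm, rfl⟩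
      by_cases hpb : p = b
      · rw [hpb] at hss hpq
        have hqa : q ≠ a := fun h => absurd ((h ▸ hpq).trans hab) (lt_irrefl b)
        have hqb : q ≠ b := hpq.ne'
        rw [hsb, Equiv.swap_apply_of_ne_of_ne hqa hqb] at hss
        exact absurd ((hss.trans hab).trans hpq) (lt_irrefl q)
      · rw [Equiv.swap_apply_of_ne_of_ne hpa hpb] at hss
        by_cases hqa : q = a
        · rw [hqa, hsa] at hss
          rw [hqa] at hpq
          exact absurd (hpq.trans hab) (fun h => absurd (hss.trans h) (lt_irrefl b))
        by_cases hqb : q = b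
        · rw [hqb, hsb] at hss
          rw [hqb] at hpq huu
          exact Or.inl ⟨p, ⟨⟨hss, hpq⟩, huu⟩, rfl, hqb.symm⟩
        · rw [Equiv.swap_apply_of_ne_of_ne hqa hqb] at hss
          exact absurd (hpq.trans hss) (lt_irrefl p)
    · rintro (⟨m, ⟨⟨ham, hmb⟩, hm⟩, hp, hq⟩ | ⟨m, ⟨⟨ham, hmb⟩, hm⟩, hp, hq⟩)
      · rw [← hp, ← hq, hsb, Equiv.swap_apply_of_ne_of_ne ham.ne' hmb.ne]
        exact ⟨⟨hmb, hm⟩, fun h => absurd (ham.trans h.1) (lt_irrefl a)⟩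
      · rw [← hp, ← hq, hsa, Equiv.swap_apply_of_ne_of_ne ham.ne' hmb.ne]
        exact ⟨⟨ham, hm⟩, fun h => absurd (hmb.trans h.1) (lt_irrefl m)⟩
  -- cardinalities of the difference sets
  have injb : Function.Injective (fun m : Fin n => (b, m)) := fun x y h => (Prod.mk.injEq _ _ _ _ ▸ h).2
  have inja : Function.Injective (fun m : Fin n => (m, a)) := fun x y h => (Prod.mk.injEq _ _ _ _ ▸ h).1
  have injb' : Function.Injective (fun m : Fin n => (m, b)) := fun x y h => (Prod.mk.injEq _ _ _ _ ▸ h).1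
  have inja' : Function.Injective (fun m : Fin n => (a, m)) := fun x y h => (Prod.mk.injEq _ _ _ _ ▸ h).2
  have memBet : ∀ m ∈ Bet, a < m ∧ m < b := by
    intro m hm; rw [hBet] at hm; simpa using hm
  have cardJI : (J \ I).card = 1 + SA.card + SB.card := by
    rw [e4, Finset.card_insert_of_notMem, Finset.card_union_of_disjoint,
      Finset.card_image_of_injective _ injb, Finset.card_image_of_injective _ inja]
    · omega
    · rw [Finset.disjoint_left]
      rintro x hx hy
      obtain ⟨m, hm, rfl⟩ := Finset.mem_image.1 hx
      obtain ⟨m', hm', he⟩ := Finset.mem_image.1 hy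
      have h1 := (Prod.mk.injEq _ _ _ _ ▸ he.symm).1
      have := (memBet m' (Finset.mem_of_mem_filter _ hm')).2
      rw [h1] at this
      exact absurd this (lt_irrefl m')
    · intro hmem
      rcases Finset.mem_union.1 hmem with h | h
      · obtain ⟨m, hm, he⟩ := Finset.mem_image.1 h
        have h2 := (Prod.mk.injEq _ _ _ _ ▸ he).2
        have := (memBet m (Finset.mem_of_mem_filter _ hm)).1
        rw [h2] at this
        exact absurd this (lt_irrefl a)
      · obtain ⟨m, hm, he⟩ := Finset.mem_image.1 h
        have h2 := (Prod.mk.injEq _ _ _ _ ▸ he).1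
        have := (memBet m (Finset.mem_of_mem_filter _ hm)).2
        rw [h2] at this
        exact absurd this (lt_irrefl b)
  have cardIJ : (I \ J).card = SA'.card + SB'.card := by
    rw [e6, Finset.card_union_of_disjoint, Finset.card_image_of_injective _ injb',
      Finset.card_image_of_injective _ inja']
    rw [Finset.disjoint_left]
    rintro x hx hy
    obtain ⟨m, hm, rfl⟩ := Finset.mem_image.1 hx
    obtain ⟨m', hm', he⟩ := Finset.mem_image.1 hy
    have h1 := (Prod.mk.injEq _ _ _ _ ▸ he.symm).1
    have := (memBet m (Finset.mem_of_mem_filter _ hm)).1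
    rw [← h1] at this
    exact absurd this (lt_irrefl m)
  have hJc : (J \ I).card + (J ∩ I).card = J.card := Finset.card_sdiff_add_card_inter J I
  have hIc : (I \ J).card + (I ∩ J).card = I.card := Finset.card_sdiff_add_card_inter I J
  have hic : (J ∩ I).card = (I ∩ J).card := by rw [Finset.inter_comm]
  -- partitions of Bet
  have hApart : SA.card + SA'.card = Bet.card := by
    have heq : Bet.filter (fun m => ¬ u m < u b) = SA' := by
      ext m
      simp only [hSA', Finset.mem_filter]
      constructor
      · rintro ⟨h1, h3⟩
        refine ⟨h1, lt_of_le_of_ne (not_lt.1 h3) ?_⟩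
        intro h
        exact (memBet m h1).2.ne (uinj h).symm
      · rintro ⟨h1, h3⟩
        exact ⟨h1, fun hh => absurd (h3.trans hh) (lt_irrefl _)⟩
    have := Finset.card_filter_add_card_filter_not (s := Bet) (p := fun m => u m < u b)
    rw [heq] at this
    rw [hSA]
    exact this
  have hBpart : SB.card + SB'.card = Bet.card := by
    have heq : Bet.filter (fun m => ¬ u a < u m) = SB' := by
      ext m
      simp only [hSB', Finset.mem_filter]
      constructor
      · rintro ⟨h1, h3⟩
        refine ⟨h1, lt_of_le_of_ne (not_lt.1 h3) ?_⟩
        intro h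
        exact (memBet m h1).1.ne' (uinj h)
      · rintro ⟨h1, h3⟩
        exact ⟨h1, fun hh => absurd (h3.trans hh) (lt_irrefl _)⟩
    have := Finset.card_filter_add_card_filter_not (s := Bet) (p := fun m => u a < u m)
    rw [heq] at this
    rw [hSB]
    exact this
  have hAB : SA.card + SB.card = Bet.card + C.card := by
    have h1 : SA ∪ SB = Bet := by
      ext m
      simp only [hSA, hSB, Finset.mem_union, Finset.mem_filter]
      constructor
      · rintro (⟨h, -⟩ | ⟨h, -⟩) <;> exact h
      · intro h
        by_cases hc : u m < u b
        · exact Or.inl ⟨h, hc⟩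
        · exact Or.inr ⟨h, hu.trans_le (not_lt.1 hc)⟩
    have h2 : SA ∩ SB = C := by
      ext m
      simp only [hSA, hSB, hC, hBet, Finset.mem_inter, Finset.mem_filter, Finset.mem_univ, true_and]
      tauto
    have := Finset.card_union_add_card_inter SA SB
    rw [h1, h2] at this
    omega
  have e0 : len u = I.card := rfl
  omega

/-- Bruhat cover condition. -/
def Cov {n : ℕ} (w : Equiv.Perm (Fin n)) (a b : Fin n) : Prop :=
  w a < w b ∧ ∀ m, a < m → m < b → ¬(w a < w m ∧ w m < w b)

lemma len_succ_iff {n : ℕ} (u : Equiv.Perm (Fin n)) {a b : Fin n} (hab : a < b) :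
    len (u * Equiv.swap a b) = len u + 1 ↔ Cov u a b := by
  classical
  rcases lt_trichotomy (u a) (u b) with h | h | h
  · rw [len_mul_swap u hab h]
    constructor
    · intro he
      refine ⟨h, fun m h1 h2 hcon => ?_⟩
      have hc : (Finset.univ.filter fun m : Fin n =>
          a < m ∧ m < b ∧ u a < u m ∧ u m < u b).card = 0 := by omega
      rw [Finset.card_eq_zero] at hc
      have hm : m ∈ (Finset.univ.filter fun m : Fin n =>
          a < m ∧ m < b ∧ u a < u m ∧ u m < u b) := by
        simp only [Finset.mem_filter, Finset.mem_univ, true_and]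
        exact ⟨h1, h2, hcon.1, hcon.2⟩
      rw [hc] at hm
      exact absurd hm (Finset.notMem_empty m)
    · rintro ⟨-, hm⟩
      have he : (Finset.univ.filter fun m : Fin n =>
          a < m ∧ m < b ∧ u a < u m ∧ u m < u b) = ∅ := by
        rw [Finset.filter_eq_empty_iff]
        rintro m - ⟨h1, h2, h3, h4⟩
        exact hm m h1 h2 ⟨h3, h4⟩
      rw [he, Finset.card_empty]
  · exact absurd (u.injective h) hab.ne
  · have key := len_mul_swap (u * Equiv.swap a b) hab
      (by
        simp only [Equiv.Perm.mul_apply, Equiv.swap_apply_left, Equiv.swap_apply_right]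
        exact h)
    rw [mul_assoc, Equiv.swap_mul_self, mul_one] at key
    constructor
    · intro he; omega
    · rintro ⟨hh, -⟩
      exact absurd (hh.trans h) (lt_irrefl _)

lemma cov_imp {n : ℕ} {w : Equiv.Perm (Fin n)} {i j k l : Fin n}
    (hij : i < j) (hkl : k < l)
    (hik : i ≠ k) (hil : i ≠ l) (hjk : j ≠ k) (hjl : j ≠ l)
    (h1 : Cov w k l) (h2 : Cov (w * Equiv.swap k l) i j) :
    Cov w i j ∧ Cov (w * Equiv.swap i j) k l := by
  obtain ⟨hwkl, hKL⟩ := h1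
  have wne : ∀ x y : Fin n, x ≠ y → w x ≠ w y := fun x y h => w.injective.ne h
  have hwij : w i < w j := by
    have := h2.1
    rwa [Equiv.Perm.mul_apply, Equiv.Perm.mul_apply,
      Equiv.swap_apply_of_ne_of_ne hik hil, Equiv.swap_apply_of_ne_of_ne hjk hjl] at this
  have hIJ : ∀ m, i < m → m < j →
      ¬(w i < w (Equiv.swap k l m) ∧ w (Equiv.swap k l m) < w j) := by
    intro m hm1 hm2
    have := h2.2 m hm1 hm2
    rwa [Equiv.Perm.mul_apply, Equiv.Perm.mul_apply, Equiv.Perm.mul_apply,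
      Equiv.swap_apply_of_ne_of_ne hik hil, Equiv.swap_apply_of_ne_of_ne hjk hjl] at this
  have goal1 : Cov w i j := by
    refine ⟨hwij, fun m him hmj hcon => ?_⟩
    by_cases hmk : m = k
    · rw [hmk] at him hmj hcon
      by_cases hlin : i < l ∧ l < j
      · have HL := hIJ l hlin.1 hlin.2
        rw [Equiv.swap_apply_right] at HL
        exact HL hcon
      · have hjl' : j < l := by
          rcases lt_or_ge l j with hc | hc
          · exact absurd ⟨him.trans hkl, hc⟩ hlin
          · exact hc.lt_of_ne hjl
        have HA := hKL j hmj hjl'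
        have HB := hIJ k him hmj
        rw [Equiv.swap_apply_left] at HB
        have hne : (w j).val ≠ (w l).val := Fin.val_ne_of_ne (wne j l hjl)
        simp only [Fin.lt_def, not_and, not_lt] at HA HB hcon hwkl
        omega
    by_cases hml : m = l
    · rw [hml] at him hmj hcon
      by_cases hkin : i < k ∧ k < j
      · have HK := hIJ k hkin.1 hkin.2
        rw [Equiv.swap_apply_left] at HK
        exact HK hcon
      · have hki : k < i := by
          rcases lt_or_ge i k with hc | hc
          · exact absurd ⟨hc, hkl.trans hmj⟩ hkin
          · exact hc.lt_of_ne (Ne.symm hik)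
        have HA := hKL i hki him
        have HB := hIJ l him hmj
        rw [Equiv.swap_apply_right] at HB
        have hne : (w i).val ≠ (w k).val := Fin.val_ne_of_ne (wne i k hik)
        simp only [Fin.lt_def, not_and, not_lt] at HA HB hcon hwkl
        omega
    · have := hIJ m him hmj
      rw [Equiv.swap_apply_of_ne_of_ne hmk hml] at this
      exact this hcon
  refine ⟨goal1, ?_, ?_⟩
  · show (w * Equiv.swap i j) k < (w * Equiv.swap i j) l
    rw [Equiv.Perm.mul_apply, Equiv.Perm.mul_apply,
      Equiv.swap_apply_of_ne_of_ne (Ne.symm hik) (Ne.symm hjk),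
      Equiv.swap_apply_of_ne_of_ne (Ne.symm hil) (Ne.symm hjl)]
    exact hwkl
  · intro m hkm hml' hcon
    rw [Equiv.Perm.mul_apply, Equiv.Perm.mul_apply, Equiv.Perm.mul_apply,
      Equiv.swap_apply_of_ne_of_ne (Ne.symm hik) (Ne.symm hjk),
      Equiv.swap_apply_of_ne_of_ne (Ne.symm hil) (Ne.symm hjl)] at hcon
    by_cases hmi : m = i
    · rw [hmi] at hkm hml' hcon
      rw [Equiv.swap_apply_left] at hcon
      by_cases hjin : k < j ∧ j < l
      · exact hKL j hjin.1 hjin.2 hcon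
      · have hlj : l < j := by
          rcases lt_or_ge j l with hc | hc
          · exact absurd ⟨hkm.trans hij, hc⟩ hjin
          · exact hc.lt_of_ne (Ne.symm hjl)
        have HA := hIJ l hml' hlj
        rw [Equiv.swap_apply_right] at HA
        have HB := hKL i hkm hml'
        have hne : (w i).val ≠ (w k).val := Fin.val_ne_of_ne (wne i k hik)
        simp only [Fin.lt_def, not_and, not_lt] at HA HB hcon hwij
        omega
    by_cases hmj' : m = j
    · rw [hmj'] at hkm hml' hcon
      rw [Equiv.swap_apply_right] at hcon
      by_cases hiin : k < i ∧ i < l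
      · exact hKL i hiin.1 hiin.2 hcon
      · have hik' : i < k := by
          rcases lt_or_ge k i with hc | hc
          · exact absurd ⟨hc, hij.trans hml'⟩ hiin
          · exact hc.lt_of_ne hik
        have HA := hIJ k hik' hkm
        rw [Equiv.swap_apply_left] at HA
        have HB := hKL j hkm hml'
        have hne : (w l).val ≠ (w j).val := Fin.val_ne_of_ne (wne l j (Ne.symm hjl))
        simp only [Fin.lt_def, not_and, not_lt] at HA HB hcon hwij
        omega
    · have := hKL m hkm hml'
      rw [Equiv.swap_apply_of_ne_of_ne hmi hmj'] at hcon
      exact this hcon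

lemma swap_mul_swap_comm {n : ℕ} {i j k l : Fin n}
    (hik : i ≠ k) (hil : i ≠ l) (hjk : j ≠ k) (hjl : j ≠ l) :
    Equiv.swap i j * Equiv.swap k l = Equiv.swap k l * Equiv.swap i j := by
  ext x
  simp only [Equiv.Perm.mul_apply, Equiv.swap_apply_def]
  split_ifs <;> simp_all

lemma bruhatOp_single {n : ℕ} (a b : Fin n) (v : Equiv.Perm (Fin n)) (y : ℤ) :
    bruhatOp a b (Finsupp.single v y) =
      if len (v * Equiv.swap a b) = len v + 1 then
        Finsupp.single (v * Equiv.swap a b) y else 0 := by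
  classical
  rw [bruhatOp, Finsupp.lsum_single]
  split_ifs with h
  · simp [Finsupp.lsingle_apply]
  · simp

theorem bruhatOp_comm' (n : ℕ) (i j k l : Fin n)
    (hij : i < j) (hkl : k < l)
    (hik : i ≠ k) (hil : i ≠ l) (hjk : j ≠ k) (hjl : j ≠ l) :
    bruhatOp i j ∘ₗ bruhatOp k l = bruhatOp k l ∘ₗ bruhatOp i j := by
  classical
  apply Finsupp.lhom_ext
  intro w x
  have hiff : (len (w * Equiv.swap k l) = len w + 1 ∧
        len (w * Equiv.swap k l * Equiv.swap i j) = len (w * Equiv.swap k l) + 1) ↔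
      (len (w * Equiv.swap i j) = len w + 1 ∧
        len (w * Equiv.swap i j * Equiv.swap k l) = len (w * Equiv.swap i j) + 1) := by
    rw [len_succ_iff _ hkl, len_succ_iff _ hij, len_succ_iff _ hij, len_succ_iff _ hkl]
    constructor
    · rintro ⟨hA, hB⟩
      exact cov_imp hij hkl hik hil hjk hjl hA hB
    · rintro ⟨hA, hB⟩
      exact cov_imp hkl hij hik.symm hjk.symm hil.symm hjl.symm hA hB
  simp only [LinearMap.comp_apply]
  rw [bruhatOp_single, bruhatOp_single]
  by_cases hc : len (w * Equiv.swap k l) = len w + 1 ∧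
      len (w * Equiv.swap k l * Equiv.swap i j) = len (w * Equiv.swap k l) + 1
  · have hc' := hiff.1 hc
    rw [if_pos hc.1, bruhatOp_single, if_pos hc.2, if_pos hc'.1, bruhatOp_single, if_pos hc'.2]
    congr 1
    rw [mul_assoc, mul_assoc, swap_mul_swap_comm hik.symm hjk.symm hil.symm hjl.symm]
  · have hc' : ¬(len (w * Equiv.swap i j) = len w + 1 ∧
        len (w * Equiv.swap i j * Equiv.swap k l) = len (w * Equiv.swap i j) + 1) :=
      fun h => hc (hiff.2 h)
    by_cases h1 : len (w * Equiv.swap k l) = len w + 1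
    · rw [if_pos h1, bruhatOp_single, if_neg (fun hb => hc ⟨h1, hb⟩)]
      by_cases h2 : len (w * Equiv.swap i j) = len w + 1
      · rw [if_pos h2, bruhatOp_single, if_neg (fun hb => hc' ⟨h2, hb⟩)]
      · rw [if_neg h2, map_zero]
    · rw [if_neg h1, map_zero]
      by_cases h2 : len (w * Equiv.swap i j) = len w + 1
      · rw [if_pos h2, bruhatOp_single, if_neg (fun hb => hc' ⟨h2, hb⟩)]
      · rw [if_neg h2, map_zero]

lemma bruhatOp_symm {n : ℕ} (i j : Fin n) : bruhatOp i j = bruhatOp j i := by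
  rw [bruhatOp, bruhatOp, Equiv.swap_comm]


/-- The Bruhat operators satisfy `[ij][kl] = [kl][ij]` for `i, j, k, l` pairwise distinct. -/
theorem bruhatOp_comm (n : ℕ) (i j k l : Fin n)
    (hij : i ≠ j) (hik : i ≠ k) (hil : i ≠ l) (hjk : j ≠ k) (hjl : j ≠ l) (hkl : k ≠ l) :
    bruhatOp i j ∘ₗ bruhatOp k l = bruhatOp k l ∘ₗ bruhatOp i j := by
  rcases hij.lt_or_gt with h1 | h1 <;> rcases hkl.lt_or_gt with h2 | h2
  · exact bruhatOp_comm' n i j k l h1 h2 hik hil hjk hjl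
  · rw [bruhatOp_symm k l]
    exact bruhatOp_comm' n i j l k h1 h2 hil hik hjl hjk
  · rw [bruhatOp_symm i j]
    exact bruhatOp_comm' n j i k l h1 h2 hjk hjl hik hil
  · rw [bruhatOp_symm i j, bruhatOp_symm k l]
    exact bruhatOp_comm' n j i l k h1 h2 hjl hjk hil hik
end

section
/- For distinct i, j, k, the Bruhat operators satisfy the 3-term relation [ij][jk] + [jk][ki] + [ki][ij] = 0, with the convention [ji] = -[ij]. -/
/-! Counting inversions pair by pair gives `ℓ(w s_pq) = ℓ(w) + 2b + 1` for `p < q` and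
`w p < w q`, where `b` is the number of `r` with `p < r < q` and `w p < w r < w q`; applied to
`w s_pq` it shows that the length drops when `w p > w q`. So `[pq] w ≠ 0` exactly when `w p < w q`
and no such `r` exists.

For `i < j < k` every two-step path in `[ij][jk] = [jk][ik] + [ik][ij]` (and in
`[jk][ij] = [ik][jk] + [ij][ik]`) sends `w` to the same permutation, so each identity says that the
left-hand path is a chain of covers exactly when one of the two right-hand paths is, and that those
two never both are; which one it is is decided by comparing `w i` with `w j` (resp. `w j` with
`w k`). The three-term relation is invariant under rotating `(i, j, k)`, and when `i` is the
smallest index it is one of these two identities. -/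

open Finsupp

/-- The signed Bruhat operator, with the convention `[ji] = -[ij]` for `i < j`
(and `[ii] = 0`). -/
noncomputable def sBruhatOp {n : ℕ} (i j : Fin n) :
    (Equiv.Perm (Fin n) →₀ ℤ) →ₗ[ℤ] (Equiv.Perm (Fin n) →₀ ℤ) :=
  if i < j then bruhatOp i j else if j < i then -bruhatOp j i else 0

open Equiv Finset

section

variable {n : ℕ} {i j k : Fin n}

lemma len_eq_sum (w : Perm (Fin n)) :
    (len w : ℤ) = ∑ u, ∑ v, if u < v ∧ w v < w u then 1 else 0 := by
  rw [len, card_filter, ← Fintype.sum_prod_type']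
  push_cast
  rfl

lemma len_mul_swap_eq_sum (w : Perm (Fin n)) (p q : Fin n) :
    (len (w * swap p q) : ℤ) =
      ∑ u, ∑ v, if swap p q u < swap p q v ∧ w v < w u then 1 else 0 := by
  rw [len_eq_sum, ← Equiv.sum_comp (swap p q)]
  refine sum_congr rfl fun u _ => ?_
  rw [← Equiv.sum_comp (swap p q)]
  simp

theorem len_mul_swap_of_lt (w : Perm (Fin n)) {p q : Fin n} (hpq : p < q) (hw : w p < w q) :
    (len (w * swap p q) : ℤ) =
      len w + 2 * #{r | p < r ∧ r < q ∧ w p < w r ∧ w r < w q} + 1 := by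
  have hw_inj : ∀ r s, w r = w s → r = s := fun r s h => w.injective h
  -- only pairs meeting `{p, q}` change status; those meeting it at `r ∉ [p, q]` cancel in pairs
  have hpair : ∀ u v, (if swap p q u < swap p q v ∧ w v < w u then (1 : ℤ) else 0)
      = (if u < v ∧ w v < w u then 1 else 0) + (if u = q then if v = p then 1 else 0 else 0)
        - (if u = p then if p < v ∧ v < q ∧ w v < w p then 1 else 0 else 0)
        + (if v = p then if p < u ∧ u < q ∧ w p < w u then 1 else 0 else 0)
        + (if u = q then if p < v ∧ v < q ∧ w v < w q then 1 else 0 else 0)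
        - (if v = q then if p < u ∧ u < q ∧ w q < w u then 1 else 0 else 0) := by
    intro u v
    simp only [swap_apply_def]
    grind
  have hmiddle : ∀ r, -(if p < r ∧ r < q ∧ w r < w p then 1 else 0)
      + (if p < r ∧ r < q ∧ w p < w r then 1 else 0)
      + (if p < r ∧ r < q ∧ w r < w q then 1 else 0)
      - (if p < r ∧ r < q ∧ w q < w r then 1 else 0)
      = 2 * (if p < r ∧ r < q ∧ w p < w r ∧ w r < w q then (1 : ℤ) else 0) := by
    grind
  have hsum := sum_congr rfl fun r (_ : r ∈ univ) => hmiddle r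
  simp only [sum_add_distrib, sum_sub_distrib, sum_neg_distrib, ← Finset.mul_sum] at hsum
  rw [len_mul_swap_eq_sum, len_eq_sum, card_filter]
  simp only [hpair, sum_add_distrib, sum_sub_distrib, sum_ite_irrel, sum_const_zero,
    Finset.sum_ite_eq', mem_univ, if_true]
  push_cast
  linarith

/-- `w s_pq` covers `w` in the Bruhat order (for `p < q`). -/
def SwapCovers (w : Perm (Fin n)) (p q : Fin n) : Prop :=
  w p < w q ∧ ∀ r, p < r → r < q → ¬(w p < w r ∧ w r < w q)

theorem len_mul_swap_eq_succ_iff (w : Perm (Fin n)) {p q : Fin n} (hpq : p < q) :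
    len (w * swap p q) = len w + 1 ↔ SwapCovers w p q := by
  rcases lt_or_gt_of_ne (w.injective.ne hpq.ne) with hw | hw
  · have hlen := len_mul_swap_of_lt w hpq hw
    have hblockers : #{r | p < r ∧ r < q ∧ w p < w r ∧ w r < w q} = 0 ↔
        ∀ r, p < r → r < q → ¬(w p < w r ∧ w r < w q) := by
      simp [Finset.card_eq_zero, Finset.filter_eq_empty_iff]
    rw [SwapCovers, ← hblockers]
    omega
  · have hlen := len_mul_swap_of_lt (w * swap p q) hpq (by simpa using hw)
    rw [mul_swap_mul_self] at hlen
    exact iff_of_false (by omega) fun h => hw.not_gt h.1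

/-- The path `w → w s_ab → w s_ab s_cd` is a chain of Bruhat covers. -/
def CoverPath (w : Perm (Fin n)) (a b c d : Fin n) : Prop :=
  SwapCovers w a b ∧ SwapCovers (w * swap a b) c d

theorem coverPath_jk_ij_iff (w : Perm (Fin n)) (hij : i < j) (hjk : j < k) :
    CoverPath w j k i j ↔ CoverPath w i k j k ∨ CoverPath w i j i k := by
  have hik := hij.trans hjk
  have hw_inj : ∀ r s, w r = w s → r = s := fun r s h => w.injective h
  simp only [CoverPath, SwapCovers, Perm.mul_apply, swap_apply_def, hij.ne, hjk.ne, hik.ne,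
    hij.ne', hjk.ne', hik.ne', if_false, if_true]
  rcases lt_or_gt_of_ne (w.injective.ne hij.ne) with hw | hw <;> grind

theorem coverPath_ij_jk_iff (w : Perm (Fin n)) (hij : i < j) (hjk : j < k) :
    CoverPath w i j j k ↔ CoverPath w j k i k ∨ CoverPath w i k i j := by
  have hik := hij.trans hjk
  have hw_inj : ∀ r s, w r = w s → r = s := fun r s h => w.injective h
  simp only [CoverPath, SwapCovers, Perm.mul_apply, swap_apply_def, hij.ne, hjk.ne, hik.ne,
    hij.ne', hjk.ne', hik.ne', if_false, if_true]
  rcases lt_or_gt_of_ne (w.injective.ne hjk.ne) with hw | hw <;> grind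

theorem not_coverPath_ik_jk_and_coverPath_ij_ik (w : Perm (Fin n)) (hij : i < j) (hjk : j < k) :
    ¬(CoverPath w i k j k ∧ CoverPath w i j i k) := by
  rintro ⟨⟨-, hji, -⟩, ⟨hij', -⟩, -⟩
  rw [Perm.mul_apply, Perm.mul_apply, swap_apply_of_ne_of_ne hij.ne' hjk.ne, swap_apply_right]
    at hji
  exact hji.not_gt hij'

theorem not_coverPath_jk_ik_and_coverPath_ik_ij (w : Perm (Fin n)) (hij : i < j) (hjk : j < k) :
    ¬(CoverPath w j k i k ∧ CoverPath w i k i j) := by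
  rintro ⟨⟨⟨hjk', -⟩, -⟩, -, hkj, -⟩
  rw [Perm.mul_apply, Perm.mul_apply, swap_apply_left, swap_apply_of_ne_of_ne hij.ne' hjk.ne]
    at hkj
  exact hkj.not_gt hjk'

lemma swap_mul_swap_eq_of_ne (hij : i ≠ j) (hjk : j ≠ k) (hik : i ≠ k) :
    swap j k * swap i j = swap i k * swap j k ∧ swap j k * swap i j = swap i j * swap i k := by
  constructor <;> ext x <;> simp only [Perm.mul_apply, swap_apply_def] <;> grind

open Classical in
lemma bruhatOp_single_of_lt {p q : Fin n} (hpq : p < q) (w : Perm (Fin n)) (m : ℤ) :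
    bruhatOp p q (single w m) = if SwapCovers w p q then single (w * swap p q) m else 0 := by
  rw [bruhatOp, lsum_single, ← len_mul_swap_eq_succ_iff w hpq]
  split_ifs <;> rfl

open Classical in
lemma bruhatOp_comp_single {a b c d : Fin n} (hab : a < b) (hcd : c < d) (w : Perm (Fin n))
    (m : ℤ) : (bruhatOp c d ∘ₗ bruhatOp a b) (single w m) =
      if CoverPath w a b c d then single (w * (swap a b * swap c d)) m else 0 := by
  rw [LinearMap.comp_apply, bruhatOp_single_of_lt hab]
  split_ifs <;> simp_all [CoverPath, bruhatOp_single_of_lt hcd, mul_assoc]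

lemma ite_eq_ite_add_ite {M : Type*} [AddMonoid M] {A B C : Prop} [Decidable A] [Decidable B]
    [Decidable C] (x : M) (hA : A ↔ B ∨ C) (hBC : ¬(B ∧ C)) :
    (if A then x else 0) = (if B then x else 0) + (if C then x else 0) := by
  by_cases hB : B <;> by_cases hC : C <;> simp_all

open Classical in
theorem bruhatOp_ij_comp_jk (hij : i < j) (hjk : j < k) :
    bruhatOp i j ∘ₗ bruhatOp j k =
      bruhatOp j k ∘ₗ bruhatOp i k + bruhatOp i k ∘ₗ bruhatOp i j := by
  have hik := hij.trans hjk
  obtain ⟨h₁, h₂⟩ := swap_mul_swap_eq_of_ne hij.ne hjk.ne hik.ne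
  refine lhom_ext fun w m => ?_
  rw [LinearMap.add_apply, bruhatOp_comp_single hjk hij, bruhatOp_comp_single hik hjk,
    bruhatOp_comp_single hij hik, ← h₂, h₁]
  exact ite_eq_ite_add_ite _ (coverPath_jk_ij_iff w hij hjk)
    (not_coverPath_ik_jk_and_coverPath_ij_ik w hij hjk)

open Classical in
theorem bruhatOp_jk_comp_ij (hij : i < j) (hjk : j < k) :
    bruhatOp j k ∘ₗ bruhatOp i j =
      bruhatOp i k ∘ₗ bruhatOp j k + bruhatOp i j ∘ₗ bruhatOp i k := by
  have hik := hij.trans hjk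
  obtain ⟨h₁, h₂⟩ := swap_mul_swap_eq_of_ne hjk.ne' hij.ne' hik.ne'
  rw [swap_comm j i, swap_comm k j, swap_comm k i] at h₁ h₂
  refine lhom_ext fun w m => ?_
  rw [LinearMap.add_apply, bruhatOp_comp_single hij hjk, bruhatOp_comp_single hjk hik,
    bruhatOp_comp_single hik hij, ← h₂, h₁]
  exact ite_eq_ite_add_ite _ (coverPath_ij_jk_iff w hij hjk)
    (not_coverPath_jk_ik_and_coverPath_ik_ij w hij hjk)

lemma sBruhatOp_of_lt (h : i < j) : sBruhatOp i j = bruhatOp i j := if_pos h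

lemma sBruhatOp_of_gt (h : j < i) : sBruhatOp i j = -bruhatOp j i := by
  rw [sBruhatOp, if_neg h.not_gt, if_pos h]

theorem sBruhatOp_three_term_of_lt_of_lt (hij : i < j) (hik : i < k) (hjk : j ≠ k) :
    sBruhatOp i j ∘ₗ sBruhatOp j k + sBruhatOp j k ∘ₗ sBruhatOp k i +
      sBruhatOp k i ∘ₗ sBruhatOp i j = 0 := by
  rw [sBruhatOp_of_lt hij, sBruhatOp_of_gt hik]
  rcases hjk.lt_or_gt with hjk | hkj
  · rw [sBruhatOp_of_lt hjk, LinearMap.comp_neg, LinearMap.neg_comp, bruhatOp_ij_comp_jk hij hjk]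
    abel
  · rw [sBruhatOp_of_gt hkj, LinearMap.comp_neg, LinearMap.neg_comp, LinearMap.comp_neg,
      LinearMap.neg_comp, neg_neg, bruhatOp_jk_comp_ij hik hkj]
    abel

end

/-- The 3-term relation `[ij][jk] + [jk][ki] + [ki][ij] = 0` for distinct `i, j, k`,
with the convention `[ji] = -[ij]`. -/
theorem bruhatOp_three_term (n : ℕ) (i j k : Fin n)
    (hij : i ≠ j) (hjk : j ≠ k) (hik : i ≠ k) :
    sBruhatOp i j ∘ₗ sBruhatOp j k + sBruhatOp j k ∘ₗ sBruhatOp k i +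
      sBruhatOp k i ∘ₗ sBruhatOp i j = 0 := by
  obtain ⟨hij', hik'⟩ | ⟨hjk', hji'⟩ | ⟨hki', hkj'⟩ :
      (i < j ∧ i < k) ∨ (j < k ∧ j < i) ∨ (k < i ∧ k < j) := by omega
  · exact sBruhatOp_three_term_of_lt_of_lt hij' hik' hjk
  · convert sBruhatOp_three_term_of_lt_of_lt hjk' hji' hik.symm using 1
    abel
  · convert sBruhatOp_three_term_of_lt_of_lt hki' hkj' hij using 1
    abel
end

section
/- In ℤ[S_3], the Dunkl elements θ_j = -Σ_{i<j}[ij] + Σ_{k>j}[jk] (as operators via the Bruhat representation) commute pairwise: θ_1θ_2 = θ_2θ_1, θ_1θ_3 = θ_3θ_1, θ_2θ_3 = θ_3θ_2 as endomorphisms of ℤ[S_3]. -/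
open Finsupp

/-- The Dunkl elements for `S_3` in the Bruhat representation:
`θ_1 = [12]+[13]`, `θ_2 = -[12]+[23]`, `θ_3 = -[13]-[23]` (0-indexed here). -/
noncomputable def dunkl : Fin 3 → ((Equiv.Perm (Fin 3) →₀ ℤ) →ₗ[ℤ] (Equiv.Perm (Fin 3) →₀ ℤ))
  | 0 => bruhatOp 0 1 + bruhatOp 0 2
  | 1 => -bruhatOp 0 1 + bruhatOp 1 2
  | 2 => -bruhatOp 0 2 - bruhatOp 1 2

/-
The Dunkl elements sum to zero, so it suffices that `θ_1` and `θ_2` commute. Writing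
`a = [12]`, `b = [13]`, `c = [23]`, the commutator `θ_1 θ_2 - θ_2 θ_1` is the difference of the
two three-term (Fomin–Kirillov) relations `ac = ba + cb` and `ca = ab + bc`. Each relation is an
identity between operators on the basis `S_3` of `ℤ[S_3]`, which is checked by a finite computation.
-/

open Equiv

theorem bruhatOp_single_s14 {n : ℕ} (i j : Fin n) (w : Perm (Fin n)) (c : ℤ) :
    bruhatOp i j (single w c) =
      if len (w * swap i j) = len w + 1 then single (w * swap i j) c else 0 := by
  classical
  simp only [bruhatOp, lsum_single]
  split_ifs <;> simp

theorem bruhatOp_mul_bruhatOp_single_apply {n : ℕ} (i j k l : Fin n) (w v : Perm (Fin n)) :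
    (bruhatOp k l * bruhatOp i j) (single w 1) v =
      if len (w * swap i j) = len w + 1 ∧
          len (w * swap i j * swap k l) = len (w * swap i j) + 1 ∧
          w * swap i j * swap k l = v then 1 else 0 := by
  rw [Module.End.mul_apply, bruhatOp_single_s14]
  by_cases h1 : len (w * swap i j) = len w + 1
  · rw [if_pos h1, bruhatOp_single_s14]
    by_cases h2 : len (w * swap i j * swap k l) = len (w * swap i j) + 1
    · rw [if_pos h2, single_apply]
      simp only [h1, h2, true_and]
    · simp [h2]
  · simp [h1]

-- `[12][23] + [23][31] + [31][12] = 0`, using `[ji] = -[ij]`.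
theorem bruhatOp_01_mul_bruhatOp_12 :
    bruhatOp (0 : Fin 3) 1 * bruhatOp 1 2 =
      bruhatOp 0 2 * bruhatOp 0 1 + bruhatOp 1 2 * bruhatOp 0 2 := by
  ext w : 2
  ext v
  simp only [LinearMap.comp_apply, lsingle_apply, LinearMap.add_apply, Finsupp.add_apply,
    bruhatOp_mul_bruhatOp_single_apply]
  revert w v
  decide

-- `[23][12] + [31][23] + [12][31] = 0`, using `[ji] = -[ij]`.
theorem bruhatOp_12_mul_bruhatOp_01 :
    bruhatOp (1 : Fin 3) 2 * bruhatOp 0 1 =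
      bruhatOp 0 1 * bruhatOp 0 2 + bruhatOp 0 2 * bruhatOp 1 2 := by
  ext w : 2
  ext v
  simp only [LinearMap.comp_apply, lsingle_apply, LinearMap.add_apply, Finsupp.add_apply,
    bruhatOp_mul_bruhatOp_single_apply]
  revert w v
  decide

theorem dunkl_two_eq : dunkl 2 = -(dunkl 0 + dunkl 1) := by
  simp only [dunkl]
  abel

theorem commute_dunkl_zero_one : Commute (dunkl 0) (dunkl 1) := by
  change dunkl 0 * dunkl 1 = dunkl 1 * dunkl 0
  simp only [dunkl, add_mul, mul_add, neg_mul, mul_neg, bruhatOp_01_mul_bruhatOp_12,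
    bruhatOp_12_mul_bruhatOp_01]
  abel

/-- The Dunkl elements commute pairwise as endomorphisms of `ℤ[S_3]`. -/
theorem dunkl_comm :
    dunkl 0 ∘ₗ dunkl 1 = dunkl 1 ∘ₗ dunkl 0 ∧
    dunkl 0 ∘ₗ dunkl 2 = dunkl 2 ∘ₗ dunkl 0 ∧
    dunkl 1 ∘ₗ dunkl 2 = dunkl 2 ∘ₗ dunkl 1 := by
  have h01 := commute_dunkl_zero_one
  have h02 : Commute (dunkl 0) (dunkl 2) :=
    dunkl_two_eq ▸ ((Commute.refl _).add_right h01).neg_right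
  have h12 : Commute (dunkl 1) (dunkl 2) :=
    dunkl_two_eq ▸ (h01.symm.add_right (Commute.refl _)).neg_right
  exact ⟨h01.eq, h02.eq, h12.eq⟩
end
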